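/- arXiv:2306.09529 — 7 statements merged into one kernel-verified Lean document; each statement's English description precedes it below -/
import Mathlib

section
/- If the strict core of a house-swapping market with objective indifferences is nonempty, then it contains exactly one allocation (where allocations are maps from agents to house types). -/
open Finset

variable {I H : Type*}

/-- `μ` is a (feasible) allocation for the market with endowment `endow`:
each house type is allocated exactly as many times as it is endowed. -/
def IsAllocation [Fintype I] [DecidableEq H] (endow : I → H) (μ : I → H) : Prop :=
  ∀ h : H, (Finset.univ.filter fun i => μ i = h).card =
    (Finset.univ.filter fun i => endow i = h).card

/-- A sub-allocation `μ'` is feasible for a coalition `I'`: for every house type endowed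
by the coalition, the coalition allocates exactly as many copies as it is endowed with. -/
def FeasibleFor [DecidableEq I] [DecidableEq H] (endow : I → H) (I' : Finset I)
    (μ' : I → H) : Prop :=
  ∀ h ∈ I'.image endow, (I'.filter fun i => μ' i = h).card =
    (I'.filter fun i => endow i = h).card

/-- A coalition `I'` with sub-allocation `μ'` blocks the allocation `μ`:
`μ'` is feasible for `I'`, weakly improves every member, and strictly improves one. -/
def Blocks [DecidableEq I] [DecidableEq H] (endow : I → H) (pref : I → H → H → Prop)
    (μ : I → H) (I' : Finset I) (μ' : I → H) : Prop :=
  FeasibleFor endow I' μ' ∧ (∀ i ∈ I', pref i (μ' i) (μ i) ∨ μ' i = μ i) ∧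
    ∃ i ∈ I', pref i (μ' i) (μ i)

/-- `μ` is in the strict core: it is an allocation admitting no blocking coalition. -/
def InStrictCore [Fintype I] [DecidableEq I] [DecidableEq H] (endow : I → H)
    (pref : I → H → H → Prop) (μ : I → H) : Prop :=
  IsAllocation endow μ ∧
    ¬ ∃ (I' : Finset I) (μ' : I → H), I'.Nonempty ∧ Blocks endow pref μ I' μ'

lemma exists_top {r : H → H → Prop} [DecidableEq H] [IsTrans H r] [IsTrichotomous H r]
    (s : Finset H) (hs : s.Nonempty) : ∃ t ∈ s, ∀ u ∈ s, u = t ∨ r t u := by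
  induction s using Finset.induction_on with
  | empty => exact absurd hs (by simp)
  | insert _ _ ha =>
    rename_i a s IH
    rcases s.eq_empty_or_nonempty with rfl | hs'
    · exact ⟨a, by simp, by simp⟩
    · obtain ⟨t, hts, htmax⟩ := IH hs'
      rcases trichotomous_of r a t with hat | heq | hta
      · refine ⟨a, mem_insert_self a s, ?_⟩
        intro u hu
        rcases mem_insert.mp hu with rfl | hu
        · exact Or.inl rfl
        · rcases htmax u hu with rfl | h
          · exact Or.inr hat
          · exact Or.inr (Trans.trans hat h)
      · refine ⟨t, mem_insert_of_mem hts, ?_⟩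
        intro u hu
        rcases mem_insert.mp hu with rfl | hu
        · exact Or.inl heq
        · exact htmax u hu
      · refine ⟨t, mem_insert_of_mem hts, ?_⟩
        intro u hu
        rcases mem_insert.mp hu with rfl | hu
        · exact Or.inr hta
        · exact htmax u hu

lemma exists_nodup_chain {α : Type*} {r : α → α → Prop} {u w : α}
    (h : Relation.ReflTransGen r u w) :
    ∃ p : List α, p.Chain' r ∧ p.head? = some u ∧ p.getLast? = some w ∧ p.Nodup := by
  induction h using Relation.ReflTransGen.head_induction_on with
  | refl => exact ⟨[w], List.isChain_singleton w, by simp, by simp, by simp⟩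
  | head hac hcb IH =>
    rename_i a c
    obtain ⟨p, hchain, hhead, hlast, hnodup⟩ := IH
    by_cases hmem : a ∈ p
    · obtain ⟨s, t, rfl⟩ := List.append_of_mem hmem
      refine ⟨a :: t, hchain.suffix ⟨s, rfl⟩, rfl, ?_, hnodup.sublist (List.sublist_append_right s _)⟩
      rw [← hlast, List.getLast?_append_of_ne_nil _ (by simp)]
    · have hpne : p ≠ [] := fun hp => by simp [hp] at hhead
      refine ⟨a :: p, List.isChain_cons.mpr ⟨?_, hchain⟩, rfl, ?_, List.nodup_cons.mpr ⟨hmem, hnodup⟩⟩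
      · intro y hy
        rw [hhead, Option.mem_some_iff] at hy
        exact hy ▸ hac
      · rw [show a :: p = [a] ++ p from rfl, List.getLast?_append_of_ne_nil _ hpne]
        exact hlast

def Arc (endow top : I → H) (J : Finset I) (u v : H) : Prop := ∃ j ∈ J, endow j = u ∧ top j = v

lemma buildL {endow top : I → H} {J : Finset I} :
    ∀ p : List H, p.Chain' (Arc endow top J) →
      ∃ L : List I, (∀ a ∈ L, a ∈ J) ∧ L.map endow = p.dropLast ∧ L.map top = p.tail
  | [], _ => ⟨[], by simp, by simp, by simp⟩
  | [t], _ => ⟨[], by simp, by simp, by simp⟩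
  | t₁ :: t₂ :: rest, hch => by
    obtain ⟨⟨j, hjJ, hje, hjt⟩, hch₂⟩ := List.isChain_cons_cons.mp hch
    obtain ⟨L, hLJ, hLe, hLt⟩ := buildL (t₂ :: rest) hch₂
    refine ⟨j :: L, ?_, ?_, ?_⟩
    · intro a ha
      rcases List.mem_cons.mp ha with rfl | ha
      exacts [hjJ, hLJ a ha]
    · simp [hLe, hje]
    · simp [hLt, hjt]

lemma forced [DecidableEq I] [DecidableEq H] (endow : I → H) (pref : I → H → H → Prop)
    (μ : I → H)
    (hcore : ¬ ∃ (I' : Finset I) (μ' : I → H), I'.Nonempty ∧ Blocks endow pref μ I' μ')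
    (J : Finset I)
    (hμa : ∀ h, (J.filter fun i => μ i = h).card = (J.filter fun i => endow i = h).card)
    (top : I → H)
    (htopmax : ∀ i : I, ∀ u ∈ J.image endow, u = top i ∨ pref i (top i) u)
    (i0 : I) (hi0 : i0 ∈ J)
    (hreach : Relation.ReflTransGen (Arc endow top J) (top i0) (endow i0)) :
    μ i0 = top i0 := by
  by_contra hne
  obtain ⟨p, hchain, hhead, hlast, hnodup⟩ := exists_nodup_chain hreach
  obtain ⟨L, hLJ, hLe, hLt⟩ := buildL p hchain
  have hpne : p ≠ [] := fun hp => by simp [hp] at hhead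
  -- the full agent list
  have hmape : (L ++ [i0]).map endow = p := by
    rw [List.map_append, hLe]
    simpa using List.dropLast_append_getLast? _ hlast
  have hheadtail : (top i0) :: p.tail = p :=
    List.cons_head?_tail hhead
  have hmapt : List.Perm ((L ++ [i0]).map top) p := by
    rw [List.map_append, hLt]
    have h1 : List.Perm (p.tail ++ [top i0]) (top i0 :: p.tail) :=
      List.perm_append_singleton _ _
    rwa [hheadtail] at h1
  have hnodupL : (L ++ [i0]).Nodup := by
    have : ((L ++ [i0]).map endow).Nodup := by rw [hmape]; exact hnodup
    exact this.of_map
  set C : Finset I := ⟨(↑(L ++ [i0]) : Multiset I), by exact Multiset.coe_nodup.mpr hnodupL⟩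
    with hCdef
  have hmemC : ∀ a : I, a ∈ C ↔ a ∈ L ++ [i0] := by
    intro a; rw [hCdef]; exact Multiset.mem_coe
  have hi0C : i0 ∈ C := (hmemC i0).mpr (by simp)
  have hCJ : ∀ a ∈ C, a ∈ J := by
    intro a ha
    rcases List.mem_append.mp ((hmemC a).mp ha) with ha | ha
    · exact hLJ a ha
    · have : a = i0 := by simpa using ha
      exact this ▸ hi0
  -- every member's current house is an endowed type
  have hμmem : ∀ i ∈ C, μ i ∈ J.image endow := by
    intro i hiC
    by_contra hmm
    have h1 : 0 < (J.filter fun j => μ j = μ i).card :=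
      card_pos.mpr ⟨i, mem_filter.mpr ⟨hCJ i hiC, rfl⟩⟩
    rw [hμa] at h1
    obtain ⟨j, hj⟩ := card_pos.mp h1
    exact hmm (mem_image.mpr ⟨j, (mem_filter.mp hj).1, (mem_filter.mp hj).2⟩)
  -- feasibility
  have hmapeq : (C.val.map top) = (C.val.map endow) := by
    rw [hCdef]
    show ((L ++ [i0]).map top : Multiset H) = ((L ++ [i0]).map endow : Multiset H)
    rw [hmape]
    exact Multiset.coe_eq_coe.mpr hmapt
  have hcount : ∀ (f : I → H) (h : H),
      (C.filter fun i => f i = h).card = Multiset.count h (C.val.map f) := by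
    intro f h
    rw [Multiset.count_map]
    show Multiset.card (C.filter fun i => f i = h).val = _
    rw [Finset.filter_val]
    congr 1
    apply Multiset.filter_congr
    intro x _
    exact eq_comm
  have hfeas : FeasibleFor endow C top := by
    intro h _
    rw [hcount top h, hcount endow h, hmapeq]
  apply hcore
  refine ⟨C, top, ⟨i0, hi0C⟩, hfeas, ?_, ⟨i0, hi0C, ?_⟩⟩
  · intro i hiC
    rcases htopmax i (μ i) (hμmem i hiC) with h | h
    · exact Or.inr h.symm
    · exact Or.inl h
  · rcases htopmax i0 (μ i0) (hμmem i0 hi0C) with h | h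
    · exact absurd h hne
    · exact h

lemma agree_aux [DecidableEq I] [DecidableEq H] (endow : I → H) (pref : I → H → H → Prop)
    (hpref : ∀ i, IsStrictTotalOrder H (pref i)) (μ ν : I → H)
    (hμc : ¬ ∃ (I' : Finset I) (μ' : I → H), I'.Nonempty ∧ Blocks endow pref μ I' μ')
    (hνc : ¬ ∃ (I' : Finset I) (μ' : I → H), I'.Nonempty ∧ Blocks endow pref ν I' μ') :
    ∀ (n : ℕ) (J : Finset I), J.card ≤ n →
      (∀ h, (J.filter fun i => μ i = h).card = (J.filter fun i => endow i = h).card) →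
      (∀ h, (J.filter fun i => ν i = h).card = (J.filter fun i => endow i = h).card) →
      ∀ i ∈ J, μ i = ν i := by
  intro n
  induction n with
  | zero =>
    intro J hJ _ _ i hi
    rw [Nat.le_zero, Finset.card_eq_zero] at hJ
    simp [hJ] at hi
  | succ n IH =>
    intro J hJcard hμa hνa i hiJ
    classical
    have hJne : J.Nonempty := ⟨i, hiJ⟩
    have h𝒯ne : (J.image endow).Nonempty := hJne.image _
    have htopex : ∀ j : I, ∃ t ∈ J.image endow, ∀ u ∈ J.image endow, u = t ∨ pref j t u := by
      intro j
      haveI := hpref j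
      exact exists_top (J.image endow) h𝒯ne
    choose top htopmem htopmax using htopex
    -- reach stays in 𝒯
    have hreach𝒯 : ∀ {u v : H}, u ∈ J.image endow →
        Relation.ReflTransGen (Arc endow top J) u v → v ∈ J.image endow := by
      intro u v hu h
      induction h with
      | refl => exact hu
      | tail _ harc ih =>
        obtain ⟨j, hjJ, hje, hjt⟩ := harc
        exact hjt ▸ htopmem j
    -- sink component root t0
    obtain ⟨t0, ht0𝒯, ht0min⟩ := Finset.exists_min_image (J.image endow)
      (fun u => ((J.image endow).filter
        fun v => Relation.ReflTransGen (Arc endow top J) u v).card) h𝒯ne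
    have hsink : ∀ u, Relation.ReflTransGen (Arc endow top J) t0 u →
        Relation.ReflTransGen (Arc endow top J) u t0 := by
      intro u hu
      by_contra hnr
      have hu𝒯 : u ∈ J.image endow := hreach𝒯 ht0𝒯 hu
      have hsub : ((J.image endow).filter
            fun v => Relation.ReflTransGen (Arc endow top J) u v) ⊂
          ((J.image endow).filter
            fun v => Relation.ReflTransGen (Arc endow top J) t0 v) := by
        constructor
        · intro v hv
          rw [mem_filter] at hv ⊢
          exact ⟨hv.1, hu.trans hv.2⟩
        · intro hcon
          have : t0 ∈ (J.image endow).filter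
              (fun v => Relation.ReflTransGen (Arc endow top J) u v) :=
            hcon (mem_filter.mpr ⟨ht0𝒯, Relation.ReflTransGen.refl⟩)
          exact hnr (mem_filter.mp this).2
      exact absurd (ht0min u hu𝒯) (not_le.mpr (card_lt_card hsub))
    -- the segment types and agents
    set 𝒞 : Finset H := (J.image endow).filter
      (fun v => Relation.ReflTransGen (Arc endow top J) t0 v) with h𝒞def
    set A : Finset I := J.filter (fun j => endow j ∈ 𝒞) with hAdef
    have hAJ : A ⊆ J := filter_subset _ _
    have hAmem : ∀ j : I, j ∈ A ↔ j ∈ J ∧ endow j ∈ 𝒞 := fun j => mem_filter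
    have hA_topC : ∀ j ∈ A, top j ∈ 𝒞 := by
      intro j hj
      obtain ⟨hjJ, hje⟩ := (hAmem j).mp hj
      rw [h𝒞def, mem_filter] at hje ⊢
      exact ⟨htopmem j, hje.2.tail ⟨j, hjJ, rfl, rfl⟩⟩
    have hA_reach : ∀ j ∈ A, Relation.ReflTransGen (Arc endow top J) (top j) (endow j) := by
      intro j hj
      obtain ⟨hjJ, hje⟩ := (hAmem j).mp hj
      have h1 : Relation.ReflTransGen (Arc endow top J) (top j) t0 := by
        have := hA_topC j hj
        rw [h𝒞def, mem_filter] at this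
        exact hsink _ this.2
      rw [h𝒞def, mem_filter] at hje
      exact h1.trans hje.2
    have hforceμ : ∀ j ∈ A, μ j = top j := fun j hj =>
      forced endow pref μ hμc J hμa top htopmax j (hAJ hj) (hA_reach j hj)
    have hforceν : ∀ j ∈ A, ν j = top j := fun j hj =>
      forced endow pref ν hνc J hνa top htopmax j (hAJ hj) (hA_reach j hj)
    by_cases hiA : i ∈ A
    · rw [hforceμ i hiA, hforceν i hiA]
    -- otherwise recurse on J \ A
    have hAne : A.Nonempty := by
      obtain ⟨j0, hj0J, hj0e⟩ := mem_image.mp ht0𝒯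
      refine ⟨j0, (hAmem j0).mpr ⟨hj0J, ?_⟩⟩
      rw [hj0e, h𝒞def, mem_filter]
      exact ⟨ht0𝒯, Relation.ReflTransGen.refl⟩
    -- the key counting lemma, for any allocation forced to top on A
    have main : ∀ ξ : I → H,
        (∀ h, (J.filter fun j => ξ j = h).card = (J.filter fun j => endow j = h).card) →
        (∀ j ∈ A, ξ j = top j) →
        ∀ h, ((J \ A).filter fun j => ξ j = h).card =
          ((J \ A).filter fun j => endow j = h).card := by
      intro ξ hξa hforce
      -- consumers of 𝒞 are exactly A
      have e3 : ∀ h ∈ 𝒞, J.filter (fun j => endow j = h) = A.filter (fun j => endow j = h) := by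
        intro h hh
        ext j
        simp only [mem_filter, hAmem]
        constructor
        · rintro ⟨h1, h3⟩; exact ⟨⟨h1, h3 ▸ hh⟩, h3⟩
        · rintro ⟨⟨h1, _⟩, h3⟩; exact ⟨h1, h3⟩
      have hcons : ∀ j ∈ J, ξ j ∈ 𝒞 → j ∈ A := by
        have hAsub : A ⊆ J.filter (fun j => ξ j ∈ 𝒞) := by
          intro j hj
          exact mem_filter.mpr ⟨hAJ hj, (hforce j hj) ▸ hA_topC j hj⟩
        have e1 : (J.filter (fun j => ξ j ∈ 𝒞)).card
            = ∑ h ∈ 𝒞, ((J.filter (fun j => ξ j ∈ 𝒞)).filter fun j => ξ j = h).card :=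
          Finset.card_eq_sum_card_fiberwise (fun j hj => (mem_filter.mp hj).2)
        have e2 : ∀ h ∈ 𝒞, (J.filter (fun j => ξ j ∈ 𝒞)).filter (fun j => ξ j = h)
            = J.filter (fun j => ξ j = h) := by
          intro h hh
          ext j
          simp only [mem_filter]
          constructor
          · rintro ⟨⟨h1, _⟩, h3⟩; exact ⟨h1, h3⟩
          · rintro ⟨h1, h3⟩; exact ⟨⟨h1, h3 ▸ hh⟩, h3⟩
        have e4 : A.card = ∑ h ∈ 𝒞, (A.filter fun j => endow j = h).card :=
          Finset.card_eq_sum_card_fiberwise (fun j hj => (hAmem j).mp hj |>.2)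
        have e5 : (J.filter (fun j => ξ j ∈ 𝒞)).card = A.card := by
          rw [e1, e4]
          apply Finset.sum_congr rfl
          intro h hh
          rw [e2 h hh, hξa h, e3 h hh]
        have e6 : A = J.filter (fun j => ξ j ∈ 𝒞) :=
          Finset.eq_of_subset_of_card_le hAsub (le_of_eq e5)
        intro j hjJ hjξ
        rw [e6]
        exact mem_filter.mpr ⟨hjJ, hjξ⟩
      -- per-type balance on A
      have hAh : ∀ h, (A.filter fun j => ξ j = h).card = (A.filter fun j => endow j = h).card := by
        intro h
        by_cases hh𝒞 : h ∈ 𝒞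
        · have l1 : A.filter (fun j => ξ j = h) = J.filter (fun j => ξ j = h) := by
            apply Finset.Subset.antisymm
            · exact filter_subset_filter _ hAJ
            · intro j hj
              obtain ⟨hjJ, hjh⟩ := mem_filter.mp hj
              exact mem_filter.mpr ⟨hcons j hjJ (hjh ▸ hh𝒞), hjh⟩
          rw [l1, ← e3 h hh𝒞, hξa h]
        · have l1 : A.filter (fun j => ξ j = h) = ∅ := by
            apply filter_eq_empty_iff.mpr
            intro j hj hjh
            exact hh𝒞 (hjh ▸ (hforce j hj) ▸ hA_topC j hj)
          have l2 : A.filter (fun j => endow j = h) = ∅ := by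
            apply filter_eq_empty_iff.mpr
            intro j hj hjh
            exact hh𝒞 (hjh ▸ ((hAmem j).mp hj).2)
          rw [l1, l2]
      -- split J into (J \ A) and A
      intro h
      have hsplit : ∀ f : I → H, (J.filter fun j => f j = h).card
          = ((J \ A).filter fun j => f j = h).card + (A.filter fun j => f j = h).card := by
        intro f
        have hu : J.filter (fun j => f j = h)
            = ((J \ A).filter fun j => f j = h) ∪ (A.filter fun j => f j = h) := by
          rw [← Finset.filter_union, Finset.sdiff_union_of_subset hAJ]
        rw [hu]
        apply Finset.card_union_of_disjoint
        exact Finset.disjoint_filter_filter Finset.sdiff_disjoint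
      have := hξa h
      rw [hsplit ξ, hsplit endow, hAh h] at this
      omega
    -- recurse
    have hcard' : (J \ A).card ≤ n := by
      have h1 : (J \ A).card < J.card := card_lt_card (Finset.sdiff_ssubset hAJ hAne)
      omega
    exact IH (J \ A) hcard' (main μ hμa hforceμ) (main ν hνa hforceν) i
      (mem_sdiff.mpr ⟨hiJ, hiA⟩)

/-- If the strict core of a house-swapping market with objective indifferences
(strict preferences over house types) is nonempty, it contains exactly one allocation. -/
theorem strict_core_unique {I H : Type*} [Fintype I] [DecidableEq I] [DecidableEq H]
    (endow : I → H) (pref : I → H → H → Prop)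
    (hpref : ∀ i, IsStrictTotalOrder H (pref i))
    (μ μ' : I → H) (hμ : InStrictCore endow pref μ) (hμ' : InStrictCore endow pref μ') :
    μ = μ' := by
  funext i
  exact agree_aux endow pref hpref μ μ' hμ.2 hμ'.2 Finset.univ.card Finset.univ le_rfl
    (fun h => hμ.1 h) (fun h => hμ'.1 h) i (Finset.mem_univ i)
end

section
/- Suppose the agents I are partitioned into I₁,…,I_K and the house types H into H₁,…,H_K with E(I_d) = H_d, and μ : I → H is an allocation such that for each d, μ restricted to I_d is feasible for I_d and μ(i) is i's most preferred house among H_d ∪ H_{d+1} ∪ … ∪ H_K for every i ∈ I_d. Then μ is in the strict core of the market. -/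
open Finset

variable {I H : Type*}

/-- Counting a filter by fibers over a finite set of values. -/
lemma fiber_card' {I H : Type*} [DecidableEq I] [DecidableEq H] (s : Finset I) (t : Finset H)
    (f : I → H) :
    (s.filter fun i => f i ∈ t).card = ∑ h ∈ t, (s.filter fun i => f i = h).card := by
  rw [Finset.card_eq_sum_card_fiberwise (f := f) (s := s.filter fun i => f i ∈ t) (t := t)
    (fun i hi => (Finset.mem_filter.1 hi).2)]
  refine Finset.sum_congr rfl fun h ht => ?_
  congr 1
  ext i
  simp only [Finset.mem_filter]
  constructor
  · rintro ⟨⟨hi, _⟩, hf⟩; exact ⟨hi, hf⟩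
  · rintro ⟨hi, hf⟩; exact ⟨⟨hi, hf ▸ ht⟩, hf⟩

/-- If fiber counts of `f` and `g` over `t` agree on `s` and `g` maps `s` into `t`,
then `f` maps `s` into `t`. -/
lemma maps_into {I H : Type*} [DecidableEq I] [DecidableEq H] (s : Finset I) (t : Finset H)
    (f g : I → H) (hg : ∀ i ∈ s, g i ∈ t)
    (hcount : ∀ h ∈ t, (s.filter fun i => f i = h).card = (s.filter fun i => g i = h).card) :
    ∀ i ∈ s, f i ∈ t := by
  have key : (s.filter fun i => f i ∈ t) = s := by
    apply Finset.eq_of_subset_of_card_le (Finset.filter_subset _ _)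
    have h1 : s.card = ∑ h ∈ t, (s.filter fun i => g i = h).card :=
      Finset.card_eq_sum_card_fiberwise hg
    rw [fiber_card' s t f, h1]
    exact le_of_eq (Finset.sum_congr rfl fun h ht => (hcount h ht).symm)
  intro i hi
  rw [← key] at hi
  exact (Finset.mem_filter.1 hi).2

/-- If agents are partitioned into `I₁,…,I_K` and houses into `H₁,…,H_K` with
`E(I_d) = H_d`, `μ` is an allocation feasible for each `I_d`, and each `i ∈ I_d`
receives his most preferred house among `H_d ∪ ⋯ ∪ H_K`, then `μ` is in the strict core. -/
theorem htts_allocation_in_strict_core {I H : Type*} [Fintype I] [DecidableEq I]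
    [DecidableEq H] (endow : I → H) (pref : I → H → H → Prop)
    (hpref : ∀ i, IsStrictTotalOrder H (pref i))
    (K : ℕ) (Iseg : Fin K → Finset I) (Hseg : Fin K → Finset H)
    (hIpart : ∀ i : I, ∃! d : Fin K, i ∈ Iseg d)
    (hHpart : ∀ h : H, ∃! d : Fin K, h ∈ Hseg d)
    (hEseg : ∀ d, (Iseg d).image endow = Hseg d)
    (μ : I → H) (halloc : IsAllocation endow μ)
    (hfeas : ∀ d, FeasibleFor endow (Iseg d) μ)
    (htop : ∀ d : Fin K, ∀ i ∈ Iseg d,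
      μ i ∈ (Finset.univ.filter fun d' => d ≤ d').biUnion Hseg ∧
      ∀ h ∈ (Finset.univ.filter fun d' => d ≤ d').biUnion Hseg, h = μ i ∨ pref i (μ i) h) :
    InStrictCore endow pref μ := by
  refine ⟨halloc, ?_⟩
  rintro ⟨I', μ', hne, hfeas', himp, j, hjI, hjstrict⟩
  have hend_seg : ∀ d, ∀ i ∈ Iseg d, endow i ∈ Hseg d := fun d i hi => by
    rw [← hEseg d]; exact Finset.mem_image_of_mem endow hi
  have hmu_seg : ∀ d, ∀ i ∈ Iseg d, μ i ∈ Hseg d := fun d =>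
    maps_into _ _ μ endow (hend_seg d)
      (fun h hh => hfeas d h (by rw [hEseg d]; exact hh))
  have hmu'_in : ∀ i ∈ I', μ' i ∈ I'.image endow :=
    maps_into _ _ μ' endow (fun i hi => Finset.mem_image_of_mem endow hi) hfeas'
  have hseg_iff : ∀ (e : Fin K) (i : I), i ∈ Iseg e ↔ endow i ∈ Hseg e := by
    intro e i
    constructor
    · exact hend_seg e i
    · intro hh
      obtain ⟨d', hd', hu'⟩ := hIpart i
      obtain ⟨e', he', hu''⟩ := hHpart (endow i)
      have h1 : e = e' := hu'' e hh
      have h2 : d' = e' := hu'' d' (hend_seg d' i hd')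
      rwa [h1, ← h2]
  have key : ∀ n : ℕ, ∀ d : Fin K, d.val = n → ∀ i ∈ I', i ∈ Iseg d → μ' i = μ i := by
    intro n
    induction n using Nat.strong_induction_on with
    | _ n IH =>
      intro d hd i hiI hid
      obtain ⟨i₀, hi₀I, hi₀e⟩ := Finset.mem_image.1 (hmu'_in i hiI)
      obtain ⟨e, heI, -⟩ := hIpart i₀
      have hμ'He : μ' i ∈ Hseg e := hi₀e ▸ hend_seg e i₀ heI
      by_cases hde : d ≤ e
      · have htail : μ' i ∈ (Finset.univ.filter fun d' => d ≤ d').biUnion Hseg :=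
          Finset.mem_biUnion.2 ⟨e, Finset.mem_filter.2 ⟨Finset.mem_univ _, hde⟩, hμ'He⟩
        rcases (htop d i hid).2 _ htail with h | h
        · exact h
        · rcases himp i hiI with h' | h'
          · haveI := hpref i
            exact absurd (_root_.trans h' h) (irrefl _)
          · exact h'
      · push_neg at hde
        exfalso
        set A : H → Finset I := fun h => I'.filter fun i' => μ' i' = h with hA
        set B : H → Finset I := fun h => (I' ∩ Iseg e).filter fun i' => μ' i' = h with hB
        have hBA : ∀ h, B h ⊆ A h := fun h =>
          Finset.filter_subset_filter _ Finset.inter_subset_left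
        have hIHe : ∀ i' ∈ I' ∩ Iseg e, μ' i' = μ i' := by
          intro i' hi'
          have hmem := Finset.mem_inter.1 hi'
          have hlt : e.val < d.val := hde
          exact IH e.val (by omega) e rfl i' hmem.1 hmem.2
        have sumA : ∑ h ∈ Hseg e, (A h).card = (I' ∩ Iseg e).card := by
          have h1 : ∀ h ∈ Hseg e, (A h).card = (I'.filter fun i' => endow i' = h).card := by
            intro h hh
            by_cases hmem : h ∈ I'.image endow
            · exact hfeas' h hmem
            · have hA0 : A h = ∅ := Finset.filter_eq_empty_iff.2
                (fun i' hi' he' => hmem (he' ▸ hmu'_in i' hi'))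
              have hE0 : (I'.filter fun i' => endow i' = h) = ∅ := Finset.filter_eq_empty_iff.2
                (fun i' hi' he' => hmem (he' ▸ Finset.mem_image_of_mem endow hi'))
              rw [hA0, hE0]
          rw [Finset.sum_congr rfl h1, ← fiber_card' I' (Hseg e) endow]
          congr 1
          ext i'
          simp only [Finset.mem_filter, Finset.mem_inter]
          exact and_congr_right fun _ => (hseg_iff e i').symm
        have sumB : ∑ h ∈ Hseg e, (B h).card = (I' ∩ Iseg e).card := by
          rw [← fiber_card' (I' ∩ Iseg e) (Hseg e) μ']
          congr 1
          apply Finset.filter_true_of_mem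
          intro i' hi'
          rw [hIHe i' hi']
          exact hmu_seg e i' (Finset.mem_inter.1 hi').2
        have hle : ∀ h ∈ Hseg e, (A h).card ≤ (B h).card := by
          by_contra hc
          push_neg at hc
          obtain ⟨h0, hh0, hlt⟩ := hc
          have hlt' : ∑ h ∈ Hseg e, (B h).card < ∑ h ∈ Hseg e, (A h).card :=
            Finset.sum_lt_sum (fun h _ => Finset.card_le_card (hBA h)) ⟨h0, hh0, hlt⟩
          rw [sumA, sumB] at hlt'
          exact lt_irrefl _ hlt'
        have hAB : A (μ' i) = B (μ' i) :=
          (Finset.eq_of_subset_of_card_le (hBA _) (hle _ hμ'He)).symm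
        have hiA : i ∈ A (μ' i) := Finset.mem_filter.2 ⟨hiI, rfl⟩
        have hiB : i ∈ B (μ' i) := hAB ▸ hiA
        have hie : i ∈ Iseg e := (Finset.mem_inter.1 (Finset.mem_filter.1 hiB).1).2
        obtain ⟨d', -, hu⟩ := hIpart i
        exact absurd ((hu d hid).trans (hu e hie).symm) (ne_of_gt hde)
  obtain ⟨dj, hdj, -⟩ := hIpart j
  have hjeq := key dj.val dj rfl j hjI hdj
  rw [hjeq] at hjstrict
  haveI := hpref j
  exact (irrefl _) hjstrict
end

section
/- Let μ be an allocation arising from a house top trading segmentation: agents are partitioned into I₁,…,I_K and houses into H₁,…,H_K with E(I_d) = H_d, μ is feasible for each I_d, and each i ∈ I_d receives his most preferred house among H_d ∪ … ∪ H_K. Then μ is the unique strict core allocation: any strict core allocation μ' satisfies μ'(i) = μ(i) for all i ∈ I. -/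
open Finset

variable {I H : Type*}

/-- An allocation arising from a house top trading segmentation is the unique strict
core allocation: any strict core allocation `μ'` agrees with it everywhere. -/
theorem htts_allocation_unique_strict_core {I H : Type*} [Fintype I] [DecidableEq I]
    [DecidableEq H] (endow : I → H) (pref : I → H → H → Prop)
    (hpref : ∀ i, IsStrictTotalOrder H (pref i))
    (K : ℕ) (Iseg : Fin K → Finset I) (Hseg : Fin K → Finset H)
    (hIpart : ∀ i : I, ∃! d : Fin K, i ∈ Iseg d)
    (hHpart : ∀ h : H, ∃! d : Fin K, h ∈ Hseg d)
    (hEseg : ∀ d, (Iseg d).image endow = Hseg d)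
    (μ : I → H) (halloc : IsAllocation endow μ)
    (hfeas : ∀ d, FeasibleFor endow (Iseg d) μ)
    (htop : ∀ d : Fin K, ∀ i ∈ Iseg d,
      μ i ∈ (Finset.univ.filter fun d' => d ≤ d').biUnion Hseg ∧
      ∀ h ∈ (Finset.univ.filter fun d' => d ≤ d').biUnion Hseg, h = μ i ∨ pref i (μ i) h) :
    ∀ μ' : I → H, InStrictCore endow pref μ' → ∀ i : I, μ' i = μ i := by
  intro μ' hcore
  obtain ⟨halloc', hnb⟩ := hcore
  have hIuniq : ∀ i (e e' : Fin K), i ∈ Iseg e → i ∈ Iseg e' → e = e' := by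
    intro i e e' he he'
    obtain ⟨d, _, hu⟩ := hIpart i
    rw [hu e he, hu e' he']
  have hHuniq : ∀ h (e e' : Fin K), h ∈ Hseg e → h ∈ Hseg e' → e = e' := by
    intro h e e' he he'
    obtain ⟨d, _, hu⟩ := hHpart h
    rw [hu e he, hu e' he']
  have hendowseg : ∀ (e : Fin K), ∀ i ∈ Iseg e, endow i ∈ Hseg e := by
    intro e i hi
    rw [← hEseg e]; exact Finset.mem_image_of_mem endow hi
  -- anyone endowed with a house of segment e lies in Iseg e
  have hendowcap : ∀ (e : Fin K) (h : H), h ∈ Hseg e → ∀ i, endow i = h → i ∈ Iseg e := by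
    intro e h hh i hei
    obtain ⟨d, hd, _⟩ := hIpart i
    have hmem : endow i ∈ Hseg d := hendowseg d i hd
    rw [hei] at hmem
    rw [hHuniq h e d hh hmem]; exact hd
  have hesets : ∀ (e : Fin K) (h : H), h ∈ Hseg e →
      (Finset.univ.filter fun i => endow i = h) = ((Iseg e).filter fun i => endow i = h) := by
    intro e h hh
    ext x
    simp only [Finset.mem_filter, Finset.mem_univ, true_and]
    exact ⟨fun hx => ⟨hendowcap e h hh x hx, hx⟩, fun hx => hx.2⟩
  -- generic capture argument
  have capture : ∀ (ν : I → H) (e : Fin K) (h : H),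
      (Finset.univ.filter fun i => ν i = h).card ≤ ((Iseg e).filter fun i => ν i = h).card →
      ∀ i, ν i = h → i ∈ Iseg e := by
    intro ν e h hc i hνi
    have hsub : ((Iseg e).filter fun i => ν i = h) ⊆ (Finset.univ.filter fun i => ν i = h) := by
      intro x hx
      simp only [Finset.mem_filter, Finset.mem_univ, true_and] at hx ⊢
      exact hx.2
    have heq := Finset.eq_of_subset_of_card_le hsub hc
    have : i ∈ ((Iseg e).filter fun i => ν i = h) := by
      rw [heq]; simp [hνi]
    exact (Finset.mem_filter.mp this).1
  -- anyone assigned (under μ) a house of segment e lies in Iseg e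
  have hμcap : ∀ (e : Fin K) (h : H), h ∈ Hseg e → ∀ i, μ i = h → i ∈ Iseg e := by
    intro e h hh
    refine capture μ e h ?_
    have h1 := halloc h
    have h2 := hfeas e h (by rw [hEseg e]; exact hh)
    rw [h1, hesets e h hh, ← h2]
  -- main induction on segments
  have key : ∀ n : ℕ, ∀ d : Fin K, d.val = n → ∀ i ∈ Iseg d, μ' i = μ i := by
    intro n
    induction n using Nat.strong_induction_on with
    | _ n IH =>
      intro d hd i hi
      have IH' : ∀ e : Fin K, e < d → ∀ j ∈ Iseg e, μ' j = μ j := by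
        intro e he
        exact IH e.val (hd ▸ he) e rfl
      -- everyone in Iseg d weakly prefers μ to μ' under μ'
      have stepA : ∀ j ∈ Iseg d, μ' j = μ j ∨ pref j (μ j) (μ' j) := by
        intro j hj
        obtain ⟨e, he, _⟩ := hHpart (μ' j)
        have hnotlt : ¬ e < d := by
          intro helt
          -- μ' assigns all copies of houses in earlier segments to earlier agents
          have hcap : j ∈ Iseg e := by
            refine capture μ' e (μ' j) ?_ j rfl
            have h1 := halloc' (μ' j)
            have h2 := hfeas e (μ' j) (by rw [hEseg e]; exact he)
            have h3 : ((Iseg e).filter fun i => μ i = μ' j) =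
                ((Iseg e).filter fun i => μ' i = μ' j) := by
              apply Finset.filter_congr
              intro x hx
              rw [IH' e helt x hx]
            rw [h1, hesets e (μ' j) he, ← h2, h3]
          exact absurd (hIuniq j e d hcap hj) (ne_of_lt helt)
        have hdle : d ≤ e := le_of_not_gt hnotlt
        have hmem : μ' j ∈ (Finset.univ.filter fun d' => d ≤ d').biUnion Hseg := by
          exact Finset.mem_biUnion.mpr ⟨e, by simp [hdle], he⟩
        rcases (htop d j hj).2 (μ' j) hmem with h | h
        · exact Or.inl h
        · exact Or.inr h
      by_contra hne
      -- build a blocking coalition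
      have hstrict : pref i (μ i) (μ' i) := by
        rcases stepA i hi with h | h
        · exact absurd h hne
        · exact h
      set I' : Finset I := (Finset.univ.filter fun e : Fin K => e ≤ d).biUnion Iseg with hI'
      have hmemI' : ∀ j : I, j ∈ I' ↔ ∃ e : Fin K, e ≤ d ∧ j ∈ Iseg e := by
        intro j
        simp [hI', Finset.mem_biUnion]
      apply hnb
      refine ⟨I', μ, ⟨i, (hmemI' i).mpr ⟨d, le_refl d, hi⟩⟩, ?_, ?_, ?_⟩
      · -- feasibility of μ on I'
        intro h hh
        obtain ⟨j, hjI', hje⟩ := Finset.mem_image.mp hh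
        obtain ⟨e, hed, hje'⟩ := (hmemI' j).mp hjI'
        have hhe : h ∈ Hseg e := by
          rw [← hje]; exact hendowseg e j hje'
        have hμf : (I'.filter fun i => μ i = h) = ((Iseg e).filter fun i => μ i = h) := by
          ext x
          simp only [Finset.mem_filter]
          constructor
          · rintro ⟨_, hx2⟩
            exact ⟨hμcap e h hhe x hx2, hx2⟩
          · rintro ⟨hx1, hx2⟩
            exact ⟨(hmemI' x).mpr ⟨e, hed, hx1⟩, hx2⟩
        have hef : (I'.filter fun i => endow i = h) = ((Iseg e).filter fun i => endow i = h) := by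
          ext x
          simp only [Finset.mem_filter]
          constructor
          · rintro ⟨_, hx2⟩
            exact ⟨hendowcap e h hhe x hx2, hx2⟩
          · rintro ⟨hx1, hx2⟩
            exact ⟨(hmemI' x).mpr ⟨e, hed, hx1⟩, hx2⟩
        rw [hμf, hef]
        exact hfeas e h (by rw [hEseg e]; exact hhe)
      · -- weak improvement
        intro j hj
        obtain ⟨e, hed, hje⟩ := (hmemI' j).mp hj
        rcases lt_or_eq_of_le hed with hlt | heq
        · exact Or.inr (IH' e hlt j hje).symm
        · subst heq
          rcases stepA j hje with h | h
          · exact Or.inr h.symm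
          · exact Or.inl h
      · exact ⟨i, (hmemI' i).mpr ⟨d, le_refl d, hi⟩, hstrict⟩
  intro i
  obtain ⟨d, hd, _⟩ := hIpart i
  exact key d.val d rfl i hd
end

section
/- In the base step of the uniqueness argument: if μ is feasible for I₁ = E⁻¹(H₁) and every i ∈ I₁ receives his most preferred house in all of H under μ, then any strict core allocation μ' satisfies μ'(i) = μ(i) for all i ∈ I₁. -/
open Finset

variable {I H : Type*}

/-- Base step of the uniqueness argument: if `μ` is feasible for `I₁ = E⁻¹(H₁)` and
every agent in `I₁` receives his most preferred house in all of `H` under `μ`, then any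
strict core allocation `μ'` agrees with `μ` on `I₁`. -/
theorem strict_core_base_step {I H : Type*} [Fintype I] [DecidableEq I] [DecidableEq H]
    (endow : I → H) (pref : I → H → H → Prop)
    (hpref : ∀ i, IsStrictTotalOrder H (pref i))
    (H1 : Finset H) (I1 : Finset I) (hI1 : I1 = Finset.univ.filter fun i => endow i ∈ H1)
    (μ : I → H) (hfeas : FeasibleFor endow I1 μ)
    (htop : ∀ i ∈ I1, ∀ h : H, h = μ i ∨ pref i (μ i) h)
    (μ' : I → H) (hμ' : InStrictCore endow pref μ') :
    ∀ i ∈ I1, μ' i = μ i := by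
  intro i hi
  by_contra hne
  apply hμ'.2
  refine ⟨I1, μ, ⟨i, hi⟩, hfeas, ?_, i, hi, ?_⟩
  · intro j hj
    rcases htop j hj (μ' j) with h | h
    · exact Or.inr h.symm
    · exact Or.inl h
  · rcases htop i hi (μ' i) with h | h
    · exact absurd h hne
    · exact h
end

section
/- Let agents be partitioned as I₁,…,I_K and houses as H₁,…,H_K with E(I_d) = H_d. Suppose μ' is a sub-allocation feasible for a coalition I' and some agent i ∈ I' ∩ I_d receives a house μ'(i) ∈ H₁ ∪ … ∪ H_{d-1} (a house from an earlier segment). Then there exists an agent i' ∈ I' ∩ I_k with k < d such that μ'(i') ∈ H_{k+1} ∪ … ∪ H_K (a house from a later segment). -/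
open Finset

variable {I H : Type*}

/-- Fiberwise counting: the number of elements of `s` whose image lies in `t`
is the sum over `t` of fiber cardinalities. -/
lemma filter_mem_card_eq_sum {I H : Type*} [DecidableEq I] [DecidableEq H]
    (s : Finset I) (t : Finset H) (f : I → H) :
    (s.filter fun j => f j ∈ t).card = ∑ h ∈ t, (s.filter fun j => f j = h).card := by
  rw [Finset.card_eq_sum_card_fiberwise (f := f) (s := s.filter fun j => f j ∈ t) (t := t)
    (fun j hj => (Finset.mem_filter.mp hj).2)]
  refine Finset.sum_congr rfl fun h hh => ?_
  rw [Finset.filter_filter]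
  congr 1
  apply Finset.filter_congr
  intro j hj
  exact ⟨fun hx => hx.2, fun hx => ⟨hx ▸ hh, hx⟩⟩

/-- Counting/pigeonhole lemma: with segmented partitions `I_d`, `H_d` (`E(I_d) = H_d`),
if a sub-allocation `μ'` feasible for a coalition `I'` gives some agent `i ∈ I' ∩ I_d`
a house from an earlier segment, then some agent `i' ∈ I' ∩ I_k` with `k < d` receives
a house from a later segment `H_{k+1} ∪ ⋯ ∪ H_K`. -/
theorem earlier_house_forces_later_house {I H : Type*} [Fintype I] [DecidableEq I]
    [DecidableEq H] (endow : I → H)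
    (K : ℕ) (Iseg : Fin K → Finset I) (Hseg : Fin K → Finset H)
    (hIpart : ∀ i : I, ∃! d : Fin K, i ∈ Iseg d)
    (hHpart : ∀ h : H, ∃! d : Fin K, h ∈ Hseg d)
    (hEseg : ∀ d, (Iseg d).image endow = Hseg d)
    (I' : Finset I) (μ' : I → H) (hfeas : FeasibleFor endow I' μ')
    (d : Fin K) (i : I) (hi : i ∈ I' ∩ Iseg d)
    (hearly : μ' i ∈ (Finset.univ.filter fun d' => d' < d).biUnion Hseg) :
    ∃ k : Fin K, k < d ∧ ∃ i' ∈ I' ∩ Iseg k,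
      μ' i' ∈ (Finset.univ.filter fun k' => k < k').biUnion Hseg := by
  classical
  obtain ⟨hiI', hiIseg⟩ := Finset.mem_inter.mp hi
  -- every member of the coalition receives a house endowed by the coalition
  have hall : ∀ j ∈ I', μ' j ∈ I'.image endow := by
    have hsum1 : I'.card = ∑ h ∈ I'.image endow, (I'.filter fun j => endow j = h).card :=
      Finset.card_eq_sum_card_fiberwise (fun j hj => Finset.mem_image_of_mem endow hj)
    have hsum2 : (I'.filter fun j => μ' j ∈ I'.image endow).card = I'.card := by
      rw [filter_mem_card_eq_sum, hsum1]
      exact Finset.sum_congr rfl fun h hh => hfeas h hh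
    have heq := Finset.eq_of_subset_of_card_le (Finset.filter_subset _ I') (le_of_eq hsum2.symm)
    intro j hj
    have hj' : j ∈ I'.filter fun j => μ' j ∈ I'.image endow := by rw [heq]; exact hj
    exact (Finset.mem_filter.mp hj').2
  -- per-house equality for every house
  have key : ∀ h : H, (I'.filter fun j => μ' j = h).card =
      (I'.filter fun j => endow j = h).card := by
    intro h
    by_cases hmem : h ∈ I'.image endow
    · exact hfeas h hmem
    · have h2 : (I'.filter fun j => endow j = h) = ∅ :=
        Finset.filter_eq_empty_iff.mpr fun j hj hje =>
          hmem (Finset.mem_image.mpr ⟨j, hj, hje⟩)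
      have h1 : (I'.filter fun j => μ' j = h) = ∅ :=
        Finset.filter_eq_empty_iff.mpr fun j hj hje => hmem (hje ▸ hall j hj)
      rw [h1, h2]
  set Hlt : Finset H := (Finset.univ.filter fun d' => d' < d).biUnion Hseg with hHlt
  -- counts of agents allocated/endowed an early house coincide
  have hTU : (I'.filter fun j => μ' j ∈ Hlt).card =
      (I'.filter fun j => endow j ∈ Hlt).card := by
    rw [filter_mem_card_eq_sum, filter_mem_card_eq_sum]
    exact Finset.sum_congr rfl fun h _ => key h
  -- endow i ∈ Hseg d, hence not in Hlt
  have hendow_i : endow i ∈ Hseg d := (hEseg d) ▸ Finset.mem_image_of_mem endow hiIseg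
  have hiU : i ∉ I'.filter fun j => endow j ∈ Hlt := by
    intro hmem
    obtain ⟨k, hk, hk2⟩ := Finset.mem_biUnion.mp (Finset.mem_filter.mp hmem).2
    have hkd : k < d := (Finset.mem_filter.mp hk).2
    obtain ⟨c, _, huniq⟩ := hHpart (endow i)
    exact absurd ((huniq k hk2).trans (huniq d hendow_i).symm) (ne_of_lt hkd)
  have hiT : i ∈ I'.filter fun j => μ' j ∈ Hlt := Finset.mem_filter.mpr ⟨hiI', hearly⟩
  -- so U ⊄ T is impossible to avoid: there is i' endowed early but allocated late
  have hnsub : ¬ (I'.filter fun j => endow j ∈ Hlt) ⊆ (I'.filter fun j => μ' j ∈ Hlt) := by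
    intro hsub
    have := Finset.eq_of_subset_of_card_le hsub (le_of_eq hTU)
    exact hiU (this ▸ hiT)
  obtain ⟨i', hi'U, hi'T⟩ := Finset.not_subset.mp hnsub
  obtain ⟨hi'I', hi'e⟩ := Finset.mem_filter.mp hi'U
  obtain ⟨k, hkmem, hi'Hk⟩ := Finset.mem_biUnion.mp hi'e
  have hkd : k < d := (Finset.mem_filter.mp hkmem).2
  -- the segment of i' is k
  obtain ⟨m, hm, hmuniq⟩ := hIpart i'
  have hendow_i' : endow i' ∈ Hseg m := (hEseg m) ▸ Finset.mem_image_of_mem endow hm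
  obtain ⟨c, _, hcuniq⟩ := hHpart (endow i')
  have hmk : m = k := (hcuniq m hendow_i').trans (hcuniq k hi'Hk).symm
  -- the segment of μ' i' is ≥ d > k
  obtain ⟨m', hm', hm'uniq⟩ := hHpart (μ' i')
  have hm'd : ¬ m' < d := by
    intro hlt
    apply hi'T
    refine Finset.mem_filter.mpr ⟨hi'I', Finset.mem_biUnion.mpr
      ⟨m', Finset.mem_filter.mpr ⟨Finset.mem_univ _, hlt⟩, hm'⟩⟩
  refine ⟨k, hkd, i', Finset.mem_inter.mpr ⟨hi'I', hmk ▸ hm⟩, ?_⟩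
  refine Finset.mem_biUnion.mpr ⟨m', Finset.mem_filter.mpr ⟨Finset.mem_univ _, ?_⟩, hm'⟩
  exact lt_of_lt_of_le hkd (le_of_not_gt hm'd)
end

section
/- In the market with I = {1,2,3,4,5}, H = {h₁,h₂,h₃,h₄}, endowments E(1)=h₁, E(2)=E(3)=h₂, E(4)=h₃, E(5)=h₄, and preferences with top choices h₂≻₁…, h₁≻₂…, h₃≻₃h₂≻₃…, h₄≻₄…, h₃≻₅…, the allocation μ(1)=h₂, μ(2)=h₁, μ(3)=h₂, μ(4)=h₄, μ(5)=h₃ is the unique strict core allocation. -/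
open Finset

variable {I H : Type*}

lemma top_not_beaten {r : Fin 4 → Fin 4 → Prop} (h : IsStrictTotalOrder (Fin 4) r) {t : Fin 4}
    (ht : ∀ h', h' ≠ t → r t h') (a : Fin 4) : ¬ r a t := by
  intro hat
  rcases eq_or_ne a t with rfl | hne
  · exact h.irrefl a hat
  · exact h.irrefl t (h.trans _ _ _ (ht a hne) hat)

lemma feas_key : ∀ I' : Finset (Fin 5), 2 ∈ I' →
    ¬ FeasibleFor (![0,1,1,2,3] : Fin 5 → Fin 4) I' ![1,0,2,3,2] := by
  unfold FeasibleFor; decide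

/-- In the example market with five agents and four house types — endowments
`E(1)=h₁, E(2)=E(3)=h₂, E(4)=h₃, E(5)=h₄` and top choices `h₂≻₁…`, `h₁≻₂…`,
`h₃≻₃h₂≻₃…`, `h₄≻₄…`, `h₃≻₅…` — the allocation `μ(1)=h₂, μ(2)=h₁, μ(3)=h₂,
μ(4)=h₄, μ(5)=h₃` is the unique strict core allocation. (Houses `h₁,…,h₄` are
indices `0,…,3` of `Fin 4` and agents `1,…,5` are indices `0,…,4` of `Fin 5`.) -/
theorem example_market_unique_strict_core
    (pref : Fin 5 → Fin 4 → Fin 4 → Prop)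
    (hpref : ∀ i, IsStrictTotalOrder (Fin 4) (pref i))
    (h1 : ∀ h : Fin 4, h ≠ 1 → pref 0 1 h)
    (h2 : ∀ h : Fin 4, h ≠ 0 → pref 1 0 h)
    (h3 : ∀ h : Fin 4, h ≠ 2 → pref 2 2 h)
    (h3' : ∀ h : Fin 4, h ≠ 2 → h ≠ 1 → pref 2 1 h)
    (h4 : ∀ h : Fin 4, h ≠ 3 → pref 3 3 h)
    (h5 : ∀ h : Fin 4, h ≠ 2 → pref 4 2 h) :
    InStrictCore (![0, 1, 1, 2, 3] : Fin 5 → Fin 4) pref ![1, 0, 1, 3, 2] ∧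
      ∀ μ' : Fin 5 → Fin 4,
        InStrictCore (![0, 1, 1, 2, 3] : Fin 5 → Fin 4) pref μ' → μ' = ![1, 0, 1, 3, 2] := by
  constructor
  · constructor
    · unfold IsAllocation; decide
    · rintro ⟨I', μ', -, hfeas, hweak, i, hi, hstrict⟩
      -- the strict improver must be agent 2 with house 2
      have hi2 : i = 2 ∧ μ' 2 = 2 := by
        fin_cases i
        · exact absurd hstrict (top_not_beaten (hpref 0) h1 _)
        · exact absurd hstrict (top_not_beaten (hpref 1) h2 _)
        · refine ⟨rfl, ?_⟩
          by_contra hne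
          have hne1 : μ' 2 ≠ 1 := fun e => (hpref 2).irrefl 1 (e ▸ hstrict)
          exact (hpref 2).irrefl 1 ((hpref 2).trans _ _ _ (h3' _ hne hne1) hstrict)
        · exact absurd hstrict (top_not_beaten (hpref 3) h4 _)
        · exact absurd hstrict (top_not_beaten (hpref 4) h5 _)
      obtain ⟨rfl, hμ2⟩ := hi2
      -- on I', μ' agrees with ![1,0,2,3,2]
      have hagree : ∀ j ∈ I', μ' j = (![1,0,2,3,2] : Fin 5 → Fin 4) j := by
        intro j hj
        fin_cases j
        · rcases hweak 0 hj with hp | he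
          · exact absurd hp (top_not_beaten (hpref 0) h1 _)
          · simpa using he
        · rcases hweak 1 hj with hp | he
          · exact absurd hp (top_not_beaten (hpref 1) h2 _)
          · simpa using he
        · simpa using hμ2
        · rcases hweak 3 hj with hp | he
          · exact absurd hp (top_not_beaten (hpref 3) h4 _)
          · simpa using he
        · rcases hweak 4 hj with hp | he
          · exact absurd hp (top_not_beaten (hpref 4) h5 _)
          · simpa using he
      have hfeas' : FeasibleFor (![0,1,1,2,3] : Fin 5 → Fin 4) I' ![1,0,2,3,2] := by
        intro h hh
        rw [← hfeas h hh]
        congr 1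
        exact Finset.filter_congr fun j hj => by rw [hagree j hj]
      exact feas_key I' hi hfeas'
  · intro μ' ⟨halloc, hnoblock⟩
    have key01 : μ' 0 = 1 ∧ μ' 1 = 0 := by
      by_contra hc
      refine hnoblock ⟨{0, 1}, ![1, 0, 1, 3, 2], ⟨0, by decide⟩, ?_, ?_, ?_⟩
      · unfold FeasibleFor; decide
      · intro i hi
        fin_cases hi
        · rcases eq_or_ne (μ' 0) 1 with he | hne
          · exact Or.inr (by simpa using he.symm)
          · exact Or.inl (by simpa using h1 _ hne)
        · rcases eq_or_ne (μ' 1) 0 with he | hne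
          · exact Or.inr (by simpa using he.symm)
          · exact Or.inl (by simpa using h2 _ hne)
      · rcases eq_or_ne (μ' 0) 1 with he | hne
        · rcases eq_or_ne (μ' 1) 0 with he' | hne'
          · exact absurd ⟨he, he'⟩ hc
          · exact ⟨1, by decide, by simpa using h2 _ hne'⟩
        · exact ⟨0, by decide, by simpa using h1 _ hne⟩
    have key34 : μ' 3 = 3 ∧ μ' 4 = 2 := by
      by_contra hc
      refine hnoblock ⟨{3, 4}, ![1, 0, 1, 3, 2], ⟨3, by decide⟩, ?_, ?_, ?_⟩
      · unfold FeasibleFor; decide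
      · intro i hi
        fin_cases hi
        · rcases eq_or_ne (μ' 3) 3 with he | hne
          · exact Or.inr (by simpa using he.symm)
          · exact Or.inl (by simpa using h4 _ hne)
        · rcases eq_or_ne (μ' 4) 2 with he | hne
          · exact Or.inr (by simpa using he.symm)
          · exact Or.inl (by simpa using h5 _ hne)
      · rcases eq_or_ne (μ' 3) 3 with he | hne
        · rcases eq_or_ne (μ' 4) 2 with he' | hne'
          · exact absurd ⟨he, he'⟩ hc
          · exact ⟨4, by decide, by simpa using h5 _ hne'⟩
        · exact ⟨3, by decide, by simpa using h4 _ hne⟩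
    obtain ⟨e0, e1⟩ := key01
    obtain ⟨e3, e4⟩ := key34
    have e2 : μ' 2 = 1 := by
      by_contra hne
      have h := halloc 1
      have hl : (Finset.univ.filter fun i => μ' i = 1) = {0} := by
        ext i
        fin_cases i <;> simp [e0, e1, e3, e4, hne] <;> decide
      have hr : ((Finset.univ.filter fun i => (![0,1,1,2,3] : Fin 5 → Fin 4) i = 1)).card = 2 := by
        decide
      rw [hl, hr] at h
      simp at h
    funext i
    fin_cases i <;> simp [e0, e1, e2, e3, e4]
end

section
/- If a strict core allocation μ' agrees with the HTTS allocation μ on I₁ ∪ … ∪ I_{d-1}, then μ' maps I_d into H_d ∪ H_{d+1} ∪ … ∪ H_K. -/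
open Finset

variable {I H : Type*}

/-- If an allocation `μ'` agrees with the segmented (HTTS) allocation `μ` on
`I₁ ∪ ⋯ ∪ I_{d-1}`, then `μ'` maps `I_d` into `H_d ∪ H_{d+1} ∪ ⋯ ∪ H_K`. -/
theorem agreeing_allocation_maps_into_later_segments {I H : Type*} [Fintype I]
    [DecidableEq I] [DecidableEq H] (endow : I → H)
    (K : ℕ) (Iseg : Fin K → Finset I) (Hseg : Fin K → Finset H)
    (hIpart : ∀ i : I, ∃! d : Fin K, i ∈ Iseg d)
    (hHpart : ∀ h : H, ∃! d : Fin K, h ∈ Hseg d)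
    (hEseg : ∀ d, (Iseg d).image endow = Hseg d)
    (μ : I → H)
    (hμseg : ∀ e : Fin K, ∀ i ∈ Iseg e, μ i ∈ Hseg e)
    (hμfeas : ∀ e : Fin K, ∀ h ∈ Hseg e,
      ((Iseg e).filter fun i => μ i = h).card = ((Iseg e).filter fun i => endow i = h).card)
    (μ' : I → H) (halloc' : IsAllocation endow μ')
    (d : Fin K)
    (hagree : ∀ e : Fin K, e < d → ∀ i ∈ Iseg e, μ' i = μ i) :
    ∀ i ∈ Iseg d, μ' i ∈ (Finset.univ.filter fun d' => d ≤ d').biUnion Hseg := by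
  
  intro i hi
  obtain ⟨e, he, heuniq⟩ := hHpart (μ' i)
  simp only [Finset.mem_biUnion, Finset.mem_filter, Finset.mem_univ, true_and]
  refine ⟨e, ?_, he⟩
  by_contra hnle
  push_neg at hnle
  have hlt : e < d := hnle
  have hsub : (Finset.univ.filter fun j => endow j = μ' i)
      = (Iseg e).filter fun j => endow j = μ' i := by
    ext j
    simp only [Finset.mem_filter, Finset.mem_univ, true_and]
    constructor
    · intro hj
      obtain ⟨d', hd', _⟩ := hIpart j
      have hm : endow j ∈ Hseg d' := (hEseg d') ▸ Finset.mem_image_of_mem endow hd'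
      rw [hj] at hm
      have : d' = e := heuniq d' hm
      exact ⟨this ▸ hd', hj⟩
    · exact fun hj => hj.2
  have hinot : i ∉ Iseg e := by
    intro hmem
    obtain ⟨d', _, hu⟩ := hIpart i
    have h1 := hu d hi
    have h2 := hu e hmem
    rw [h2.trans h1.symm] at hlt
    exact lt_irrefl _ hlt
  have hμeq : ((Iseg e).filter fun j => μ' j = μ' i)
      = (Iseg e).filter fun j => μ j = μ' i := by
    apply Finset.filter_congr
    intro j hj
    rw [hagree e hlt j hj]
  have hcard := hμfeas e (μ' i) he
  have hkey := halloc' (μ' i)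
  have hss : insert i ((Iseg e).filter fun j => μ' j = μ' i)
      ⊆ Finset.univ.filter fun j => μ' j = μ' i := by
    intro j hj
    rcases Finset.mem_insert.mp hj with rfl | hj
    · simp
    · simp [(Finset.mem_filter.mp hj).2]
  have hle := Finset.card_le_card hss
  rw [Finset.card_insert_of_notMem (fun hm => hinot (Finset.mem_filter.mp hm).1)] at hle
  rw [hsub] at hkey
  rw [hμeq] at hle
  omega
end
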